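/- Over the field ℚ, let B be the 10×10 nilpotent Jordan matrix of shape (4,3,3), i.e. the block-diagonal matrix J(4,3,3) with Jordan blocks of sizes 4, 3, 3. Then there exists a nilpotent 10×10 matrix A over ℚ with AB = BA and A^9 ≠ 0; that is, the maximal index of nilpotency among nilpotent matrices commuting with B equals 10. -/
import Mathlib


/-- A nilpotent `n × n` matrix `A` has shape (Jordan type) given by the multiset of parts `μ`
(a partition of `n` with positive parts) if for every `k ≥ 0` the dimension of the kernel of
`A ^ k` equals `Σ_j min (μ_j, k)`. -/
def hasShape {n : ℕ} {F : Type*} [Field F] (A : Matrix (Fin n) (Fin n) F)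
    (μ : Multiset ℕ) : Prop :=
  (∀ i ∈ μ, 0 < i) ∧ μ.sum = n ∧
    ∀ k : ℕ, Module.finrank F (LinearMap.ker ((A ^ k).mulVecLin)) =
      (μ.map (fun m => min m k)).sum

/-- The nilpotent Jordan matrix `J(4,3,3)` of shape `(4,3,3)`: the block-diagonal
matrix with Jordan blocks (with eigenvalue `0`) of sizes 4,3,3. -/
def B0 : Matrix (Fin 10) (Fin 10) ℚ :=
  Matrix.of fun i j => if (j : ℕ) = (i : ℕ) + 1 ∧ (i : ℕ) ≠ 3 ∧ (i : ℕ) ≠ 6 then 1 else 0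

def AZ : Matrix (Fin 10) (Fin 10) ℤ :=
  Matrix.of fun i j =>
    if (1 ≤ (j:ℕ) ∧ (j:ℕ) ≤ 6 ∧ (i:ℕ) = (j:ℕ) + 3) ∨ (7 ≤ (j:ℕ) ∧ (i:ℕ) + 7 = (j:ℕ)) then 1
    else 0

def BZ : Matrix (Fin 10) (Fin 10) ℤ :=
  Matrix.of fun i j => if (j : ℕ) = (i : ℕ) + 1 ∧ (i : ℕ) ≠ 3 ∧ (i : ℕ) ≠ 6 then 1 else 0

noncomputable def φ : Matrix (Fin 10) (Fin 10) ℤ →+* Matrix (Fin 10) (Fin 10) ℚ :=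
  (Int.castRingHom ℚ).mapMatrix

lemma hB : φ BZ = B0 := by
  ext i j
  simp [φ, BZ, B0, apply_ite (Int.cast : ℤ → ℚ)]

lemma hAZ10 : AZ ^ 10 = 0 := by decide
lemma hAZ9 : (AZ ^ 9) 0 3 = 1 := by decide
lemma hcomm : AZ * BZ = BZ * AZ := by decide

/-- There is a nilpotent matrix `A` over `ℚ` commuting with `B0 = J(4,3,3)` with `A ^ 9 ≠ 0`
(and `A ^ 10 = 0`): the maximal index of nilpotency among nilpotent matrices commuting with
`B0` equals `10`. -/
theorem stmt_16 :
    ∃ A : Matrix (Fin 10) (Fin 10) ℚ, IsNilpotent A ∧ A * B0 = B0 * A ∧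
      A ^ 9 ≠ 0 ∧ A ^ 10 = 0 := by
  refine ⟨φ AZ, ⟨10, ?_⟩, ?_, ?_, ?_⟩
  · rw [← map_pow, hAZ10, map_zero]
  · rw [← hB, ← map_mul, ← map_mul, hcomm]
  · intro h
    rw [← map_pow] at h
    have h2 : (φ (AZ ^ 9)) 0 3 = 0 := by rw [h]; rfl
    simp only [φ, RingHom.mapMatrix_apply, Matrix.map_apply, hAZ9] at h2
    norm_num at h2
  · rw [← map_pow, hAZ10, map_zero]
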